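/- arXiv:1402.5513 — 8 statements merged into one kernel-verified Lean document; each statement's English description precedes it below -/
import Mathlib

section
/- In the coin-tossing game, the strategy of Skeptic that announces M_n = -2^{-b_n - 1}, where b_n is the number of rounds k < n with x_k = 1, keeps the capital K_n nonnegative for all n and all moves of Forecaster and Reality. -/
/-!
With `s_n = 2^{-b_n}` Skeptic stakes `M_n = -s_n / 2`, and `s_n ≤ K_n` is invariant: since
`x_n ∈ {0,1}` we have `s_{n+1} = s_n (1 - x_n / 2)`, and
`K_n - (s_n / 2)(x_n - p_n) - s_n (1 - x_n / 2) = (K_n - s_n) + s_n p_n / 2 ≥ 0`.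
-/

open Filter Finset

def capital (p M x : ℕ → ℝ) : ℕ → ℝ
  | 0 => 1
  | n + 1 => capital p M x n + M n * (x n - p n)

lemma two_zpow_neg_add_indicator {x : ℝ} (hx : x = 0 ∨ x = 1) (b : ℕ) :
    (2 : ℝ) ^ (-((b + if x = 1 then 1 else 0 : ℕ) : ℤ)) = 2 ^ (-(b : ℤ)) * (1 - x / 2) := by
  rcases hx with rfl | rfl
  · simp
  · rw [if_pos rfl, Nat.cast_add_one, neg_add, zpow_add₀ two_ne_zero]
    norm_num

lemma le_add_neg_half_mul_sub {K s p x : ℝ} (hsK : s ≤ K) (hs : 0 ≤ s) (hp : 0 ≤ p) :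
    s * (1 - x / 2) ≤ K + -(s / 2) * (x - p) := by
  nlinarith [mul_nonneg hs hp]

theorem two_zpow_neg_le_capital (p x : ℕ → ℝ) (hp : ∀ n, 0 ≤ p n) (hx : ∀ n, x n = 0 ∨ x n = 1)
    (b : ℕ → ℕ) (hb : ∀ n, b (n + 1) = b n + if x n = 1 then 1 else 0)
    (M : ℕ → ℝ) (hM : ∀ n, M n = -(2 : ℝ) ^ (-(b n : ℤ) - 1)) :
    ∀ n, (2 : ℝ) ^ (-(b n : ℤ)) ≤ capital p M x n := by
  intro n
  induction n with
  | zero => exact zpow_le_one_of_nonpos₀ one_le_two (by omega)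
  | succ n ih =>
    rw [capital, hb, two_zpow_neg_add_indicator (hx n), hM, zpow_sub_one₀ two_ne_zero,
      ← div_eq_mul_inv]
    exact le_add_neg_half_mul_sub ih (by positivity) (hp n)

open scoped Classical in
/-- In the coin-tossing game, Skeptic's strategy `M n = -2^{-b n - 1}`, where
`b n` is the number of rounds `k < n` with `x k = 1`, keeps the capital
nonnegative for all moves of Forecaster and Reality. -/
theorem stmt_0 (p x : ℕ → ℝ)
    (hp : ∀ n, p n ∈ Set.Icc (0 : ℝ) 1)
    (hx : ∀ n, x n = 0 ∨ x n = 1)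
    (b : ℕ → ℕ)
    (hb : ∀ n, b n = ((Finset.range n).filter (fun k => x k = 1)).card)
    (M : ℕ → ℝ)
    (hM : ∀ n, M n = -(2 : ℝ) ^ (-(b n : ℤ) - 1)) :
    ∀ n, 0 ≤ capital p M x n := by
  have hb_succ : ∀ n, b (n + 1) = b n + if x n = 1 then 1 else 0 := fun n => by
    simp only [hb, ← Nat.count_eq_card_filter_range, Nat.count_succ]
  intro n
  exact (zpow_pos two_pos _).le.trans
    (two_zpow_neg_le_capital p x (fun n => (hp n).1) hx b hb_succ M hM n)
end

section
/- In the coin-tossing game, Skeptic can force the event: if ∑_n p_n = ∞ then ∑_n x_n = ∞. Concretely, the strategy M_n = -2^{-b_n-1}, where b_n = #{k<n : x_k = 1}, keeps the capital nonnegative, and on any path with ∑_n p_n = ∞ and ∑_n x_n < ∞ the capital tends to infinity. -/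
/-!
Write `b n` for the number of `1`s among the first `n` tosses. The capital never drops below
`2^{-b n}`: a toss `x n = 0` only gains, while a toss `x n = 1` loses at most the stake
`2^{-b n - 1}`, which is half the current bound, and the bound itself halves. If only finitely
many `1`s occur, the stake is eventually a constant `c > 0` and the capital grows by `c * p n`
at each step, so it diverges together with `∑ p n`.
-/

open Filter Finset

theorem Nat.count_eq_count_of_forall_not {P : ℕ → Prop} [DecidablePred P] {N n : ℕ}
    (hn : N ≤ n) (h : ∀ m, N ≤ m → m < n → ¬ P m) : Nat.count P n = Nat.count P N := by
  obtain ⟨k, rfl⟩ := Nat.exists_eq_add_of_le hn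
  have hnone : Nat.count (fun m => P (N + m)) k = 0 :=
    Nat.count_of_forall_not fun m hm => h (N + m) (by omega) (by omega)
  rw [Nat.count_add, hnone, add_zero]

theorem tendsto_atTop_of_eventually_succ_eq_add_mul {u p : ℕ → ℝ} {c : ℝ} (hc : 0 < c)
    (hp0 : ∀ n, 0 ≤ p n) (hp : ¬ Summable p)
    (hu : ∀ᶠ n in atTop, u (n + 1) = u n + c * p n) : Tendsto u atTop atTop := by
  obtain ⟨N, hN⟩ := eventually_atTop.1 hu
  set S : ℕ → ℝ := fun n => ∑ k ∈ range n, p k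
  have hconst : ∀ n ≥ N, u n - c * S n = u N - c * S N := fun n hn => by
    induction n, hn using Nat.le_induction with
    | base => rfl
    | succ n hn ih => rw [← ih, hN n hn]; simp only [S, sum_range_succ]; ring
  have hS : Tendsto S atTop atTop := (not_summable_iff_tendsto_nat_atTop_of_nonneg hp0).1 hp
  refine (tendsto_atTop_add_const_left _ (u N - c * S N) (hS.const_mul_atTop hc)).congr' ?_
  filter_upwards [eventually_ge_atTop N] with n hn
  rw [← hconst n hn]; ring

namespace CoinTossing

variable {p M x : ℕ → ℝ}

theorem capital_succ (n : ℕ) :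
    capital p M x (n + 1) = capital p M x n + M n * (x n - p n) := rfl

noncomputable def halvingStake (x : ℕ → ℝ) (n : ℕ) : ℝ :=
  -(2 : ℝ) ^ (-(Nat.count (fun k => x k = 1) n : ℤ) - 1)

theorem two_zpow_neg_count_le_capital_halvingStake (hp : ∀ n, 0 ≤ p n)
    (hx : ∀ n, x n = 0 ∨ x n = 1) (n : ℕ) :
    (2 : ℝ) ^ (-(Nat.count (fun k => x k = 1) n : ℤ)) ≤ capital p (halvingStake x) x n := by
  induction n with
  | zero => simp [capital]
  | succ n ih =>
    set b := Nat.count (fun k => x k = 1) n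
    have hdouble : (2 : ℝ) ^ (-(b : ℤ)) = 2 * 2 ^ (-(b : ℤ) - 1) := by
      rw [zpow_sub_one₀ two_ne_zero]; ring
    have hgain : 0 ≤ (2 : ℝ) ^ (-(b : ℤ) - 1) * p n := mul_nonneg (by positivity) (hp n)
    simp only [capital_succ, halvingStake, Nat.count_succ]
    rcases hx n with h | h
    · simp only [h, zero_ne_one, if_false, add_zero]
      linarith
    · simp only [h, if_true, Nat.cast_add, Nat.cast_one, neg_add, ← sub_eq_add_neg]
      linarith

theorem eventually_eq_zero_of_summable (hx : ∀ n, x n = 0 ∨ x n = 1) (hs : Summable x) :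
    ∀ᶠ n in atTop, x n = 0 := by
  filter_upwards [hs.tendsto_atTop_zero.eventually (gt_mem_nhds one_pos)] with n hn
  exact (hx n).resolve_right hn.ne

end CoinTossing

open CoinTossing

open scoped Classical in
/-- Skeptic can force `∑ p n = ∞ → ∑ x n = ∞` with the strategy
`M n = -2^{-b n - 1}`: the capital stays nonnegative, and on any path with
`∑ p n = ∞` and `∑ x n < ∞` the capital tends to infinity. -/
theorem stmt_1 (p x : ℕ → ℝ)
    (hp : ∀ n, p n ∈ Set.Icc (0 : ℝ) 1)
    (hx : ∀ n, x n = 0 ∨ x n = 1)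
    (b : ℕ → ℕ)
    (hb : ∀ n, b n = ((Finset.range n).filter (fun k => x k = 1)).card)
    (M : ℕ → ℝ)
    (hM : ∀ n, M n = -(2 : ℝ) ^ (-(b n : ℤ) - 1)) :
    (∀ n, 0 ≤ capital p M x n) ∧
      (¬ Summable p → Summable x →
        Tendsto (capital p M x) atTop atTop) := by
  obtain rfl : M = halvingStake x := funext fun n => by
    simp only [hM, hb, halvingStake, Nat.count_eq_card_filter_range]
  have hp0 n : 0 ≤ p n := (hp n).1
  refine ⟨fun n => (zpow_pos two_pos _).le.trans
    (two_zpow_neg_count_le_capital_halvingStake hp0 hx n), fun hps hxs => ?_⟩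
  obtain ⟨N, hN⟩ := eventually_atTop.1 (eventually_eq_zero_of_summable hx hxs)
  refine tendsto_atTop_of_eventually_succ_eq_add_mul (c := 2 ^ (-(b N : ℤ) - 1))
    (zpow_pos two_pos _) hp0 hps ?_
  filter_upwards [eventually_ge_atTop N] with n hn
  have hcount : Nat.count (fun k => x k = 1) n = b N := by
    rw [hb, ← Nat.count_eq_card_filter_range]
    exact Nat.count_eq_count_of_forall_not hn fun m hm _ => by simp [hN m hm]
  rw [capital_succ, halvingStake, hcount, hN n hn]
  ring
end

section
/- In the coin-tossing game, Skeptic can force the event: if ∑_n p_n < ∞ then ∑_n x_n < ∞. Concretely, the strategy M_n = 2^{-c_n-1}, where c_n is the unique natural number with c_n - 1 ≤ ∑_{k=1}^n p_k < c_n, keeps the capital nonnegative, and on any path with ∑_n p_n < ∞ and ∑_n x_n = ∞ the capital satisfies limsup_n K_n = ∞. -/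
/-!
While `∑ p` lies in `[c - 1, c)` Skeptic stakes `2^{-c-1}`, and the capital stays above the
potential `2^{-c-1} (2 + c - ∑ p)`. Inside one bracket the potential drops by exactly the worst
possible loss `2^{-c-1} p`; when `∑ p` moves on to the next bracket the stake halves, and the
potential still drops by at least the loss because `∑ p` has grown by at most `1`. If `∑ p < ∞`
only finitely many brackets are visited, so the stakes are bounded below: every `x n = 1` earns
a fixed amount while the total loss stays below `∑ p`.
-/

open Filter Finset

theorem capital_eq_one_add_sum (p M x : ℕ → ℝ) (n : ℕ) :
    capital p M x n = 1 + ∑ k ∈ range n, M k * (x k - p k) := by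
  induction n with
  | zero => simp [capital]
  | succ n ih => rw [capital, ih, sum_range_succ, add_assoc]

theorem capital_sub_le_capital_succ {p M x : ℕ → ℝ} {n : ℕ} (hM : 0 ≤ M n) (hx : 0 ≤ x n) :
    capital p M x n - M n * p n ≤ capital p M x (n + 1) := by
  rw [capital]
  nlinarith

theorem tendsto_capital_atTop {p M x : ℕ → ℝ} {ε B : ℝ} (hε : 0 < ε)
    (hM : ∀ n, ε ≤ M n ∧ M n ≤ B) (hp : ∀ n, 0 ≤ p n) (hps : Summable p)
    (hx : ∀ n, 0 ≤ x n) (hxs : ¬ Summable x) :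
    Tendsto (capital p M x) atTop atTop := by
  have hX : Tendsto (fun n => ∑ k ∈ range n, x k) atTop atTop :=
    (not_summable_iff_tendsto_nat_atTop_of_nonneg hx).mp hxs
  refine tendsto_atTop_mono (fun n => ?_)
    (tendsto_atTop_add_const_right _ (1 - B * ∑' k, p k) (hX.const_mul_atTop hε))
  have hgain : ε * ∑ k ∈ range n, x k ≤ ∑ k ∈ range n, M k * x k := by
    rw [mul_sum]
    exact sum_le_sum fun k _ => mul_le_mul_of_nonneg_right (hM k).1 (hx k)
  have hloss : ∑ k ∈ range n, M k * p k ≤ B * ∑' k, p k := by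
    calc ∑ k ∈ range n, M k * p k ≤ ∑ k ∈ range n, B * p k :=
          sum_le_sum fun k _ => mul_le_mul_of_nonneg_right (hM k).2 (hp k)
      _ ≤ B * ∑' k, p k := by
          rw [← mul_sum]
          exact mul_le_mul_of_nonneg_left (hps.sum_le_tsum _ fun k _ => hp k)
            (hε.le.trans ((hM 0).1.trans (hM 0).2))
  rw [capital_eq_one_add_sum]
  simp only [mul_sub, sum_sub_distrib]
  linarith

theorem eq_or_eq_succ_of_bracket {c c' : ℕ} {s s' : ℝ} (hc : (c : ℝ) - 1 ≤ s ∧ s < c)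
    (hc' : (c' : ℝ) - 1 ≤ s' ∧ s' < c') (hle : s ≤ s') (hle' : s' ≤ s + 1) :
    c' = c ∨ c' = c + 1 := by
  have h₁ : c < c' + 1 := by exact_mod_cast (by linarith : (c : ℝ) < c' + 1)
  have h₂ : c' < c + 2 := by exact_mod_cast (by linarith : (c' : ℝ) < c + 2)
  omega

noncomputable def potential (c : ℕ) (s : ℝ) : ℝ := 2 ^ (-(c : ℤ) - 1) * (2 + c - s)

theorem potential_pos {c : ℕ} {s : ℝ} (hs : s < c) : 0 < potential c s := by
  unfold potential
  have : 0 < 2 + (c : ℝ) - s := by linarith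
  positivity

theorem potential_add_le {c c' : ℕ} {s s' : ℝ} (hc : (c : ℝ) - 1 ≤ s ∧ s < c)
    (hc' : (c' : ℝ) - 1 ≤ s' ∧ s' < c') (hle : s ≤ s') (hle' : s' ≤ s + 1) :
    potential c' s' + 2 ^ (-(c' : ℤ) - 1) * (s' - s) ≤ potential c s := by
  unfold potential
  rcases eq_or_eq_succ_of_bracket hc hc' hle hle' with rfl | rfl
  · linarith
  · have hhalf : (2 : ℝ) ^ (-((c + 1 : ℕ) : ℤ) - 1) = 2 ^ (-(c : ℤ) - 1) / 2 := by
      rw [Nat.cast_succ, show -((c : ℤ) + 1) - 1 = -(c : ℤ) - 1 - 1 by ring,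
        zpow_sub_one₀ two_ne_zero, div_eq_mul_inv]
    have hw : (0 : ℝ) < 2 ^ (-(c : ℤ) - 1) := by positivity
    rw [hhalf]
    push_cast
    nlinarith

section Strategy

variable {p x M : ℕ → ℝ} {c : ℕ → ℕ}

theorem potential_le_capital_succ (hp : ∀ n, p n ∈ Set.Icc (0 : ℝ) 1) (hx : ∀ n, 0 ≤ x n)
    (hc : ∀ n, (c n : ℝ) - 1 ≤ ∑ k ∈ range (n + 1), p k ∧ ∑ k ∈ range (n + 1), p k < c n)
    (hM : ∀ n, M n = (2 : ℝ) ^ (-(c n : ℤ) - 1)) (n : ℕ) :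
    potential (c n) (∑ k ∈ range (n + 1), p k) ≤ capital p M x (n + 1) := by
  have hM0 : ∀ n, 0 ≤ M n := fun n => (hM n).symm ▸ by positivity
  induction n with
  | zero =>
    -- the first step starts from the bracket `c = 1` of the empty sum
    have hstep := potential_add_le (c := 1) (s := 0) (by norm_num) (hc 0)
      (by simpa using (hp 0).1) (by simpa using (hp 0).2)
    have h1 : potential 1 0 ≤ 1 := by norm_num [potential]
    have := capital_sub_le_capital_succ (p := p) (hM0 0) (hx 0) (n := 0)
    simp only [zero_add, range_one, sum_singleton, sub_zero] at hstep ⊢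
    rw [← hM 0] at hstep
    rw [capital] at this
    linarith
  | succ n ih =>
    have hstep := potential_add_le (hc n) (hc (n + 1))
      (by rw [sum_range_succ _ (n + 1)]; linarith [(hp (n + 1)).1])
      (by rw [sum_range_succ _ (n + 1)]; linarith [(hp (n + 1)).2])
    rw [sum_range_succ _ (n + 1), add_sub_cancel_left, ← hM, ← sum_range_succ] at hstep
    linarith [capital_sub_le_capital_succ (p := p) (hM0 (n + 1)) (hx (n + 1))]

theorem exists_pos_le_stake (hp : ∀ n, 0 ≤ p n) (hps : Summable p)
    (hc : ∀ n, (c n : ℝ) - 1 ≤ ∑ k ∈ range (n + 1), p k)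
    (hM : ∀ n, M n = (2 : ℝ) ^ (-(c n : ℤ) - 1)) :
    ∃ ε > 0, ∀ n, ε ≤ M n ∧ M n ≤ 1 := by
  set B := ⌈∑' k, p k⌉₊ + 1
  refine ⟨2 ^ (-(B : ℤ) - 1), by positivity, fun n => ?_⟩
  have hcB : c n ≤ B := by
    have := hps.sum_le_tsum (range (n + 1)) fun k _ => hp k
    have : (c n : ℝ) ≤ B := by
      push_cast [B]
      linarith [hc n, Nat.le_ceil (∑' k, p k)]
    exact_mod_cast this
  rw [hM]
  exact ⟨zpow_le_zpow_right₀ one_le_two (by omega),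
    zpow_le_one_of_nonpos₀ one_le_two (by omega)⟩

end Strategy

/-- Skeptic can force `∑ p n < ∞ → ∑ x n < ∞` with the strategy
`M n = 2^{-c n - 1}`, where `c n` is the natural number with
`c n - 1 ≤ ∑_{k ≤ n} p k < c n`: the capital stays nonnegative, and on any
path with `∑ p n < ∞` and `∑ x n = ∞` the limsup of the capital is infinite. -/
theorem stmt_2 (p x : ℕ → ℝ)
    (hp : ∀ n, p n ∈ Set.Icc (0 : ℝ) 1)
    (hx : ∀ n, x n = 0 ∨ x n = 1)
    (c : ℕ → ℕ)
    (hc : ∀ n, (c n : ℝ) - 1 ≤ ∑ k ∈ Finset.range (n + 1), p k ∧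
      ∑ k ∈ Finset.range (n + 1), p k < c n)
    (M : ℕ → ℝ)
    (hM : ∀ n, M n = (2 : ℝ) ^ (-(c n : ℤ) - 1)) :
    (∀ n, 0 ≤ capital p M x n) ∧
      (Summable p → ¬ Summable x →
        ∀ C : ℝ, ∃ᶠ n in atTop, C < capital p M x n) := by
  have hx0 : ∀ n, 0 ≤ x n := fun n => by rcases hx n with h | h <;> simp [h]
  refine ⟨fun n => ?_, fun hps hxs C => ?_⟩
  · cases n with
    | zero => exact zero_le_one
    | succ n =>
      exact (potential_pos (hc n).2).le.trans (potential_le_capital_succ hp hx0 hc hM n)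
  · obtain ⟨ε, hε, hMε⟩ := exists_pos_le_stake (fun n => (hp n).1) hps (fun n => (hc n).1) hM
    exact ((tendsto_capital_atTop hε hMε (fun n => (hp n).1) hps hx0 hxs).eventually_gt_atTop
      C).frequently
end

section
/- Let (p_k) be a sequence in [0,1] and c_n the natural number with c_n - 1 ≤ ∑_{k=1}^n p_k < c_n. Then ∑_{k=1}^∞ 2^{-c_k - 1} p_k ≤ 1. -/
/-!
With `S n = ∑_{k < n} p k`, the summand is dominated by the telescoping difference
`2^{-S k} - 2^{-S (k+1)}`: since `c k > S (k+1) = S k + p k`, it is at most `2^{-S (k+1)} p k / 2`,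
and `p / 2 ≤ 2^p - 1` for `p ≥ 0`. The partial sums are therefore bounded by `2^{-S 0} = 1`.
-/

open Finset

lemma one_add_half_le_two_rpow {q : ℝ} (hq : 0 ≤ q) : 1 + q / 2 ≤ (2 : ℝ) ^ q := by
  have hlog : q / 2 ≤ q * Real.log 2 := by
    nlinarith [Real.log_two_gt_d9]
  calc 1 + q / 2 ≤ q * Real.log 2 + 1 := by linarith
    _ ≤ Real.exp (q * Real.log 2) := Real.add_one_le_exp _
    _ = (2 : ℝ) ^ q := by rw [Real.rpow_def_of_pos two_pos, mul_comm]

lemma two_rpow_neg_sub_one_mul_le_sub {s q C : ℝ} (hq : 0 ≤ q) (hC : s + q ≤ C) :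
    (2 : ℝ) ^ (-C - 1) * q ≤ (2 : ℝ) ^ (-s) - (2 : ℝ) ^ (-(s + q)) := by
  have hpos : 0 < (2 : ℝ) ^ (-(s + q)) := Real.rpow_pos_of_pos two_pos _
  have hmono : (2 : ℝ) ^ (-C - 1) ≤ (2 : ℝ) ^ (-(s + q)) / 2 := by
    rw [← Real.rpow_sub_one two_ne_zero]
    exact Real.rpow_le_rpow_of_exponent_le one_le_two (by linarith)
  have hsplit : (2 : ℝ) ^ (-s) = (2 : ℝ) ^ (-(s + q)) * (2 : ℝ) ^ q := by
    rw [← Real.rpow_add two_pos]; ring_nf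
  calc (2 : ℝ) ^ (-C - 1) * q ≤ (2 : ℝ) ^ (-(s + q)) / 2 * q :=
        mul_le_mul_of_nonneg_right hmono hq
    _ ≤ (2 : ℝ) ^ (-s) - (2 : ℝ) ^ (-(s + q)) := by
        rw [hsplit]; nlinarith [one_add_half_le_two_rpow hq]

lemma tsum_le_of_le_sub_succ {f g : ℕ → ℝ} (hf : ∀ k, 0 ≤ f k)
    (hfg : ∀ k, f k ≤ g k - g (k + 1)) (hg : ∀ n, 0 ≤ g n) : ∑' k, f k ≤ g 0 := by
  refine Real.tsum_le_of_sum_range_le hf fun n => ?_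
  calc ∑ k ∈ range n, f k ≤ ∑ k ∈ range n, (g k - g (k + 1)) :=
        sum_le_sum fun k _ => hfg k
    _ = g 0 - g n := sum_range_sub' g n
    _ ≤ g 0 := by linarith [hg n]

/-- If `c n` is the natural number with `c n - 1 ≤ ∑_{k ≤ n} p k < c n`, then
`∑_k 2^{-c k - 1} p k ≤ 1`. -/
theorem stmt_5 (p : ℕ → ℝ)
    (hp : ∀ n, p n ∈ Set.Icc (0 : ℝ) 1)
    (c : ℕ → ℕ)
    (hc : ∀ n, (c n : ℝ) - 1 ≤ ∑ k ∈ Finset.range (n + 1), p k ∧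
      ∑ k ∈ Finset.range (n + 1), p k < c n) :
    (∑' k : ℕ, (2 : ℝ) ^ (-(c k : ℤ) - 1) * p k) ≤ 1 := by
  set S : ℕ → ℝ := fun n => ∑ k ∈ range n, p k
  have hterm : ∀ k,
      (2 : ℝ) ^ (-(c k : ℤ) - 1) * p k ≤ (2 : ℝ) ^ (-S k) - (2 : ℝ) ^ (-S (k + 1)) := by
    intro k
    have hS : S (k + 1) = S k + p k := sum_range_succ p k
    have hzpow : (2 : ℝ) ^ (-(c k : ℤ) - 1) = (2 : ℝ) ^ (-(c k : ℝ) - 1) := by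
      rw [← Real.rpow_intCast]; push_cast; rfl
    have hlt : S k + p k < c k := hS ▸ (hc k).2
    rw [hzpow, hS]
    exact two_rpow_neg_sub_one_mul_le_sub (hp k).1 hlt.le
  have hS0 : S 0 = 0 := sum_range_zero p
  simpa [hS0] using tsum_le_of_le_sub_succ
    (fun k => mul_nonneg (zpow_nonneg zero_le_two _) (hp k).1) hterm
    (fun n => (Real.rpow_pos_of_pos two_pos _).le)
end

section
/- In the coin-tossing game, Reality can strongly comply with the event: ∑_n p_n < ∞ if and only if ∑_n x_n < ∞. That is, there is a strategy of Reality such that (1) on every play in which Skeptic keeps his capital nonnegative, the event holds, and (2) the capital never exceeds the initial capital K_0 = 1. -/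
open Filter Finset

/-!
Reality watches the slack `1 - K n`, which its strategy keeps nonnegative. While the count
`∑ k < n, x k` trails `∑ k < n, p k` by at least 1, Reality plays 1 unless that would hand
Skeptic more than half the slack; otherwise it plays 0 unless that would hand Skeptic more than
the fraction `p n` of the slack.

If `∑ x < ∞ = ∑ p`, Reality is eventually behind and refusing to play 1; every such round
multiplies the slack by at least `1 + p n / 2`, and one with `p n > 0` makes it positive.
If `∑ p < ∞ = ∑ x`, Reality is eventually ahead; every round multiplies the slack by at least
`(1 - p n) * (1 + x n)`, and one with `x n = 1` makes it positive. In both cases the product of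
the factors diverges, so the slack would exceed 1, that is, Skeptic's capital would become
negative.
-/

theorem Finset.one_add_sum_le_prod_one_add {ι : Type*} (s : Finset ι) {a : ι → ℝ}
    (ha : ∀ i ∈ s, 0 ≤ a i) : 1 + ∑ i ∈ s, a i ≤ ∏ i ∈ s, (1 + a i) := by
  induction s using Finset.cons_induction with
  | empty => simp
  | cons j s _ ih =>
    rw [sum_cons, prod_cons]
    have hj0 := ha j (mem_cons_self j s)
    have ih := ih fun i hi => ha i (mem_cons_of_mem hi)
    have hs0 : 0 ≤ ∑ i ∈ s, a i := sum_nonneg fun i hi => ha i (mem_cons_of_mem hi)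
    nlinarith

theorem Finset.one_sub_sum_le_prod_one_sub {ι : Type*} (s : Finset ι) {a : ι → ℝ}
    (ha : ∀ i ∈ s, a i ∈ Set.Icc (0 : ℝ) 1) :
    1 - ∑ i ∈ s, a i ≤ ∏ i ∈ s, (1 - a i) := by
  induction s using Finset.cons_induction with
  | empty => simp
  | cons j s _ ih =>
    rw [sum_cons, prod_cons]
    obtain ⟨hj0, hj1⟩ := ha j (mem_cons_self j s)
    have ih := ih fun i hi => ha i (mem_cons_of_mem hi)
    have hs0 : 0 ≤ ∑ i ∈ s, a i := sum_nonneg fun i hi => (ha i (mem_cons_of_mem hi)).1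
    nlinarith

theorem tendsto_sum_Ico_atTop_of_not_summable {a : ℕ → ℝ} (ha : ∀ n, 0 ≤ a n)
    (h : ¬Summable a) (m : ℕ) : Tendsto (fun n => ∑ k ∈ Ico m n, a k) atTop atTop := by
  have hrange := (not_summable_iff_tendsto_nat_atTop_of_nonneg ha).1 h
  refine (tendsto_atTop_add_const_right _ (-∑ k ∈ range m, a k) hrange).congr' ?_
  filter_upwards [eventually_ge_atTop m] with n hn
  rw [sum_Ico_eq_sub _ hn, sub_eq_add_neg]

theorem tendsto_prod_Ico_one_add_atTop {a : ℕ → ℝ} (ha : ∀ n, 0 ≤ a n) (h : ¬Summable a)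
    (m : ℕ) : Tendsto (fun n => ∏ k ∈ Ico m n, (1 + a k)) atTop atTop :=
  tendsto_atTop_mono (fun n => (Ico m n).one_add_sum_le_prod_one_add fun k _ => ha k)
    (tendsto_atTop_add_const_left _ 1 (tendsto_sum_Ico_atTop_of_not_summable ha h m))

theorem sum_Ico_le_tsum_sub_sum_range {a : ℕ → ℝ} (ha : ∀ n, 0 ≤ a n) (h : Summable a)
    (m n : ℕ) : ∑ k ∈ Ico m n, a k ≤ ∑' k, a k - ∑ k ∈ range m, a k := by
  rcases le_total m n with hmn | hnm
  · rw [sum_Ico_eq_sub _ hmn]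
    linarith [h.sum_le_tsum (range n) fun k _ => ha k]
  · rw [Ico_eq_empty_of_le hnm, sum_empty, sub_nonneg]
    exact h.sum_le_tsum (range m) fun k _ => ha k

theorem exists_ge_ne_zero_of_not_summable {f : ℕ → ℝ} (h : ¬Summable f) (N : ℕ) :
    ∃ n ≥ N, f n ≠ 0 := by
  by_contra! hf
  exact h (summable_of_ne_finset_zero (s := range N) fun n hn => hf n (by simpa using hn))

theorem eventually_eq_zero_of_summable {x : ℕ → ℝ} (hx : ∀ n, x n = 0 ∨ x n = 1)
    (h : Summable x) : ∀ᶠ n in atTop, x n = 0 := by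
  filter_upwards [h.tendsto_atTop_zero.eventually (gt_mem_nhds one_pos)] with n hn
  exact (hx n).resolve_right fun h1 => hn.ne h1

theorem eventually_sum_range_add_one_lt {a b : ℕ → ℝ} (ha : ∀ n, 0 ≤ a n)
    (hb : ∀ n, 0 ≤ b n) (hsa : Summable a) (hsb : ¬Summable b) :
    ∀ᶠ n in atTop, ∑ k ∈ range n, a k + 1 < ∑ k ∈ range n, b k := by
  filter_upwards [((not_summable_iff_tendsto_nat_atTop_of_nonneg hb).1 hsb).eventually_gt_atTop
    (∑' k, a k + 1)] with n hn
  linarith [hsa.sum_le_tsum (range n) fun k _ => ha k]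

theorem not_tendsto_prod_Ico_atTop_of_mul_le {s c : ℕ → ℝ} {m : ℕ} {B : ℝ}
    (hc : ∀ n ≥ m, 0 ≤ c n) (hs : ∀ n ≥ m, s n * c n ≤ s (n + 1)) (hm : 0 < s m)
    (hB : ∀ n, s n ≤ B) : ¬Tendsto (fun n => ∏ k ∈ Ico m n, c k) atTop atTop := by
  have hgrowth : ∀ n ≥ m, s m * ∏ k ∈ Ico m n, c k ≤ s n := by
    intro n hn
    induction n, hn using Nat.le_induction with
    | base => simp
    | succ n hn ih =>
      rw [prod_Ico_succ_top hn, ← mul_assoc]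
      exact (mul_le_mul_of_nonneg_right ih (hc n hn)).trans (hs n hn)
  intro htends
  obtain ⟨n, hbig, hn⟩ :=
    (((htends.const_mul_atTop hm).eventually_gt_atTop B).and (eventually_ge_atTop m)).exists
  linarith [hgrowth n hn, hB n]

/-- Reality's move in a round with forecast `p` and stake `M`, when the capital is `K` and the
previous forecasts and moves sum to `S` and `X`. -/
noncomputable def move (p M K S X : ℝ) : ℝ :=
  if X + 1 ≤ S then (if M * (1 - p) ≤ (1 - K) / 2 then 1 else 0)
  else (if -(M * p) ≤ (1 - K) * p then 0 else 1)

section Move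

variable {p M K S X : ℝ}

theorem move_eq_zero_or_one : move p M K S X = 0 ∨ move p M K S X = 1 := by
  unfold move
  split_ifs <;> simp

theorem half_slack_lt_of_lt_mul_one_sub (hp : p ∈ Set.Icc (0 : ℝ) 1) (hK : K ≤ 1)
    (h : (1 - K) / 2 < M * (1 - p)) : (1 - K) / 2 < M := by
  nlinarith [hp.1, hp.2]

theorem slack_lt_neg_of_mul_lt_neg_mul (hp : 0 ≤ p) (h : (1 - K) * p < -(M * p)) :
    1 - K < -M :=
  lt_of_mul_lt_mul_right (by rwa [neg_mul]) hp

theorem gain_move_le (hp : p ∈ Set.Icc (0 : ℝ) 1) (hK : K ≤ 1) :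
    M * (move p M K S X - p) ≤ 1 - K := by
  unfold move
  split_ifs with hS h h
  · nlinarith [hp.1]
  · nlinarith [half_slack_lt_of_lt_mul_one_sub hp hK (not_le.1 h), hp.1]
  · nlinarith [hp.1, hp.2]
  · nlinarith [slack_lt_neg_of_mul_lt_neg_mul hp.1 (not_le.1 h), hp.2]

theorem slack_mul_le_of_behind (hp : p ∈ Set.Icc (0 : ℝ) 1) (hK : K ≤ 1) (hS : X + 1 ≤ S)
    (hx : move p M K S X = 0) :
    (1 - K) * (1 + p / 2) ≤ 1 - (K + M * (move p M K S X - p)) := by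
  unfold move at hx ⊢
  rw [if_pos hS] at hx ⊢
  split_ifs at hx ⊢ with h
  · norm_num at hx
  · nlinarith [half_slack_lt_of_lt_mul_one_sub hp hK (not_le.1 h), hp.1]

theorem slack_pos_of_behind (hp : p ∈ Set.Icc (0 : ℝ) 1) (hK : K ≤ 1) (hS : X + 1 ≤ S)
    (hx : move p M K S X = 0) (hp_pos : 0 < p) : 0 < 1 - (K + M * (move p M K S X - p)) := by
  unfold move at hx ⊢
  rw [if_pos hS] at hx ⊢
  split_ifs at hx ⊢ with h
  · norm_num at hx
  · nlinarith [half_slack_lt_of_lt_mul_one_sub hp hK (not_le.1 h)]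

theorem slack_mul_le_of_ahead (hp : p ∈ Set.Icc (0 : ℝ) 1) (hK : K ≤ 1) (hS : ¬X + 1 ≤ S) :
    (1 - K) * ((1 - p) * (1 + move p M K S X)) ≤ 1 - (K + M * (move p M K S X - p)) := by
  obtain ⟨hp0, hp1⟩ := hp
  unfold move
  rw [if_neg hS]
  split_ifs with h
  · nlinarith
  · nlinarith [slack_lt_neg_of_mul_lt_neg_mul hp0 (not_le.1 h)]

theorem slack_pos_of_ahead (hp : p ∈ Set.Icc (0 : ℝ) 1) (hK : K ≤ 1) (hS : ¬X + 1 ≤ S)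
    (hx : move p M K S X = 1) (hp_lt : p < 1) : 0 < 1 - (K + M * (move p M K S X - p)) := by
  unfold move at hx ⊢
  rw [if_neg hS] at hx ⊢
  split_ifs at hx ⊢ with h
  · norm_num at hx
  · nlinarith [slack_lt_neg_of_mul_lt_neg_mul hp.1 (not_le.1 h)]

end Move

noncomputable def realityState (p M : ℕ → ℝ) : ℕ → ℝ × ℝ × ℝ
  | 0 => (1, 0, 0)
  | n + 1 =>
    let st := realityState p M n
    let x := move (p n) (M n) st.1 st.2.1 st.2.2
    (st.1 + M n * (x - p n), st.2.1 + p n, st.2.2 + x)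

noncomputable def reality (p M : ℕ → ℝ) (n : ℕ) : ℝ :=
  move (p n) (M n) (realityState p M n).1 (realityState p M n).2.1 (realityState p M n).2.2

theorem realityState_congr {p p' M M' : ℕ → ℝ} {n : ℕ} (hp : ∀ k < n, p k = p' k)
    (hM : ∀ k < n, M k = M' k) : realityState p M n = realityState p' M' n := by
  induction n with
  | zero => rfl
  | succ n ih =>
    simp only [realityState, ih (fun k hk => hp k (by omega)) (fun k hk => hM k (by omega)),
      hp n n.lt_succ_self, hM n n.lt_succ_self]

theorem reality_congr {p p' M M' : ℕ → ℝ} {n : ℕ} (hp : ∀ k ≤ n, p k = p' k)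
    (hM : ∀ k ≤ n, M k = M' k) : reality p M n = reality p' M' n := by
  rw [reality, reality, realityState_congr (fun k hk => hp k hk.le) (fun k hk => hM k hk.le),
    hp n le_rfl, hM n le_rfl]

theorem realityState_eq (p M : ℕ → ℝ) (n : ℕ) :
    realityState p M n = (capital p M (reality p M) n, ∑ k ∈ range n, p k,
      ∑ k ∈ range n, reality p M k) := by
  induction n with
  | zero => simp [realityState, capital]
  | succ n ih =>
    simp only [realityState, capital, sum_range_succ, reality, ih]

theorem reality_eq (p M : ℕ → ℝ) (n : ℕ) :
    reality p M n = move (p n) (M n) (capital p M (reality p M) n) (∑ k ∈ range n, p k)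
      (∑ k ∈ range n, reality p M k) := by
  rw [reality, realityState_eq]

theorem capital_reality_succ (p M : ℕ → ℝ) (n : ℕ) :
    capital p M (reality p M) (n + 1) = capital p M (reality p M) n +
      M n * (move (p n) (M n) (capital p M (reality p M) n) (∑ k ∈ range n, p k)
        (∑ k ∈ range n, reality p M k) - p n) := by
  rw [capital, ← reality_eq]

theorem reality_eq_zero_or_one (p M : ℕ → ℝ) (n : ℕ) :
    reality p M n = 0 ∨ reality p M n = 1 :=
  move_eq_zero_or_one

theorem reality_nonneg (p M : ℕ → ℝ) (n : ℕ) : 0 ≤ reality p M n := by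
  rcases reality_eq_zero_or_one p M n with h | h <;> simp [h]

section Reality

variable {p M : ℕ → ℝ} (hp : ∀ n, p n ∈ Set.Icc (0 : ℝ) 1)
include hp

theorem capital_reality_le_one (n : ℕ) : capital p M (reality p M) n ≤ 1 := by
  induction n with
  | zero => simp [capital]
  | succ n ih =>
    rw [capital_reality_succ]
    linarith [gain_move_le (S := ∑ k ∈ range n, p k) (X := ∑ k ∈ range n, reality p M k)
      (M := M n) (hp n) ih]

theorem summable_of_summable_reality (hK : ∀ n, 0 ≤ capital p M (reality p M) n)
    (hx : Summable (reality p M)) : Summable p := by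
  by_contra hnp
  obtain ⟨N, hN⟩ := eventually_atTop.1 <|
    (eventually_sum_range_add_one_lt (reality_nonneg p M) (fun n => (hp n).1) hx hnp).and
      (eventually_eq_zero_of_summable (reality_eq_zero_or_one p M) hx)
  have hbehind : ∀ n ≥ N, ∑ k ∈ range n, reality p M k + 1 ≤ ∑ k ∈ range n, p k :=
    fun n hn => (hN n hn).1.le
  have hzero : ∀ n ≥ N, move (p n) (M n) (capital p M (reality p M) n) (∑ k ∈ range n, p k)
      (∑ k ∈ range n, reality p M k) = 0 := fun n hn => reality_eq p M n ▸ (hN n hn).2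
  obtain ⟨m, hmN, hpm⟩ := exists_ge_ne_zero_of_not_summable hnp N
  have hgrowth : ∀ n ≥ m + 1, (1 - capital p M (reality p M) n) * (1 + p n / 2) ≤
      1 - capital p M (reality p M) (n + 1) := fun n hn => by
    rw [capital_reality_succ]
    exact slack_mul_le_of_behind (hp n) (capital_reality_le_one hp n) (hbehind n (by omega))
      (hzero n (by omega))
  have hpos : 0 < 1 - capital p M (reality p M) (m + 1) := by
    rw [capital_reality_succ]
    exact slack_pos_of_behind (hp m) (capital_reality_le_one hp m) (hbehind m hmN) (hzero m hmN)
      (lt_of_le_of_ne (hp m).1 (Ne.symm hpm))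
  have hhalf : ¬Summable fun n => p n / 2 := by rwa [summable_div_const_iff two_ne_zero]
  exact not_tendsto_prod_Ico_atTop_of_mul_le (s := fun n => 1 - capital p M (reality p M) n)
    (c := fun n => 1 + p n / 2) (fun n _ => by linarith [(hp n).1]) hgrowth hpos
    (fun n => sub_le_self _ (hK n))
    (tendsto_prod_Ico_one_add_atTop (fun n => by linarith [(hp n).1]) hhalf (m + 1))

theorem summable_reality_of_summable (hK : ∀ n, 0 ≤ capital p M (reality p M) n)
    (hsp : Summable p) : Summable (reality p M) := by
  by_contra hnx
  have hp0 : ∀ n, 0 ≤ p n := fun n => (hp n).1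
  have htail_small : ∀ᶠ n in atTop, ∑' k, p k - 1 / 2 < ∑ k ∈ range n, p k :=
    hsp.hasSum.tendsto_sum_nat.eventually (lt_mem_nhds (by linarith))
  obtain ⟨N, hN⟩ := eventually_atTop.1 <|
    (eventually_sum_range_add_one_lt hp0 (reality_nonneg p M) hsp hnx).and htail_small
  have hahead : ∀ n ≥ N, ¬∑ k ∈ range n, reality p M k + 1 ≤ ∑ k ∈ range n, p k :=
    fun n hn => by linarith [(hN n hn).1]
  have htail : ∀ a ≥ N, ∀ n, ∑ k ∈ Ico a n, p k < 1 / 2 :=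
    fun a ha n => by linarith [sum_Ico_le_tsum_sub_sum_range hp0 hsp a n, (hN a ha).2]
  obtain ⟨m, hmN, hxm⟩ := exists_ge_ne_zero_of_not_summable hnx N
  have hpm : p m < 1 := by
    have := htail m hmN (m + 1)
    rw [Nat.Ico_succ_singleton, sum_singleton] at this
    linarith
  have hgrowth : ∀ n ≥ m + 1,
      (1 - capital p M (reality p M) n) * ((1 - p n) * (1 + reality p M n)) ≤
        1 - capital p M (reality p M) (n + 1) := fun n hn => by
    rw [capital_reality_succ, reality_eq]
    exact slack_mul_le_of_ahead (hp n) (capital_reality_le_one hp n) (hahead n (by omega))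
  have hpos : 0 < 1 - capital p M (reality p M) (m + 1) := by
    rw [capital_reality_succ]
    exact slack_pos_of_ahead (hp m) (capital_reality_le_one hp m) (hahead m hmN)
      (reality_eq p M m ▸ (reality_eq_zero_or_one p M m).resolve_left hxm) hpm
  have hdiverge : Tendsto (fun n => ∏ k ∈ Ico (m + 1) n, (1 - p k) * (1 + reality p M k))
      atTop atTop := by
    refine tendsto_atTop_mono (fun n => ?_) <|
      (tendsto_prod_Ico_one_add_atTop (reality_nonneg p M) hnx (m + 1)).const_mul_atTop
        one_half_pos
    rw [prod_mul_distrib]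
    gcongr
    · exact prod_nonneg fun k _ => by linarith [reality_nonneg p M k]
    · linarith [(Ico (m + 1) n).one_sub_sum_le_prod_one_sub fun k _ => hp k,
        htail (m + 1) (by omega) n]
  exact not_tendsto_prod_Ico_atTop_of_mul_le (s := fun n => 1 - capital p M (reality p M) n)
    (fun n _ => mul_nonneg (by linarith [(hp n).2]) (by linarith [reality_nonneg p M n]))
    hgrowth hpos (fun n => sub_le_self _ (hK n)) hdiverge

end Reality

/-- In the coin-tossing game, Reality can strongly comply with the event
`∑ p n < ∞ ↔ ∑ x n < ∞`: there is a strategy `R` (adapted: Reality's move at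
round `n` depends only on Forecaster's and Skeptic's moves up to round `n`)
producing 0-1 moves, such that whenever Skeptic keeps the capital nonnegative,
the event holds and the capital never exceeds the initial capital 1. -/
theorem stmt_6 :
    ∃ R : (ℕ → ℝ) → (ℕ → ℝ) → ℕ → ℝ,
      (∀ p p' M M' : ℕ → ℝ, ∀ n, (∀ k ≤ n, p k = p' k) → (∀ k ≤ n, M k = M' k) →
        R p M n = R p' M' n) ∧
      ∀ p M : ℕ → ℝ, (∀ n, p n ∈ Set.Icc (0 : ℝ) 1) →
        (∀ n, R p M n = 0 ∨ R p M n = 1) ∧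
        ((∀ n, 0 ≤ capital p M (R p M) n) →
          ((Summable p ↔ Summable (R p M)) ∧
            ∀ n, capital p M (R p M) n ≤ 1)) :=
  ⟨reality, fun _ _ _ _ _ => reality_congr, fun p M hp =>
    ⟨reality_eq_zero_or_one p M, fun hK =>
      ⟨⟨summable_reality_of_summable hp hK, summable_of_summable_reality hp hK⟩,
        capital_reality_le_one hp⟩⟩⟩
end

section
/- Let {a_n} be a sequence of positive reals. Then there exists a sequence {ε_n} of positive reals such that (i) ε_n depends only on a_1,…,a_n, (ii) ε_n a_n ≤ 1 for all n, (iii) if ∑_n a_n = ∞ then ∑_n ε_n a_n = ∞ and ε_n → 0, and (iv) if ∑_n a_n < ∞ then {ε_n} converges to a positive real. -/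
/-!
Take `ε n = 1 / S n` with `S n = 1 + a 0 + ⋯ + a n`. Then `ε n * a n ≤ 1` is clear, and if `∑ a n`
converges then `ε n → 1 / (1 + ∑ a n) > 0`. If it diverges then `S n → ∞`, so `ε n → 0`, and
`∑ a n / S n` diverges by the Abel–Dini theorem: the block `∑_{N < k ≤ n} a k / S k` is at least
`(S n - S N) / S n = 1 - S N / S n`, which tends to `1`, so the tails of the series do not vanish.
-/

open Filter Topology Finset

section AbelDini

variable {S : ℕ → ℝ}

lemma one_sub_div_le_sum_sub_div (hmono : Monotone S) (hpos : ∀ n, 0 < S n) (N m : ℕ) :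
    1 - S N / S (m + N) ≤ ∑ k ∈ range m, (S (k + N + 1) - S (k + N)) / S (k + N + 1) := calc
  1 - S N / S (m + N) = ∑ k ∈ range m, (S (k + N + 1) - S (k + N)) / S (m + N) := by
    have htel := sum_range_sub (fun k => S (k + N)) m
    simp only [add_right_comm _ 1 N, zero_add] at htel
    rw [← sum_div, htel, sub_div, div_self (hpos _).ne']
  _ ≤ ∑ k ∈ range m, (S (k + N + 1) - S (k + N)) / S (k + N + 1) := by
    refine sum_le_sum fun k hk => div_le_div_of_nonneg_left ?_ (hpos _) (hmono ?_)
    · exact sub_nonneg.2 (hmono (Nat.le_succ _))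
    · have := mem_range.1 hk
      omega

/-- Abel–Dini theorem. -/
theorem not_summable_sub_div_of_tendsto_atTop (hmono : Monotone S) (hpos : ∀ n, 0 < S n)
    (htop : Tendsto S atTop atTop) :
    ¬ Summable fun n => (S (n + 1) - S n) / S (n + 1) := by
  intro hsum
  set g : ℕ → ℝ := fun n => (S (n + 1) - S n) / S (n + 1)
  have hg : ∀ n, 0 ≤ g n := fun n =>
    div_nonneg (sub_nonneg.2 (hmono (Nat.le_succ n))) (hpos _).le
  have htail : ∀ N, 1 ≤ ∑' k, g (k + N) := by
    intro N
    have hlim : Tendsto (fun m => 1 - S N / S (m + N)) atTop (𝓝 1) := by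
      have h := (htop.comp (tendsto_add_atTop_nat N)).inv_tendsto_atTop.const_mul (S N)
      simpa [div_eq_mul_inv] using tendsto_const_nhds.sub h
    refine le_of_tendsto' hlim fun m => (one_sub_div_le_sum_sub_div hmono hpos N m).trans ?_
    exact ((summable_nat_add_iff N).2 hsum).sum_le_tsum _ fun k _ => hg _
  have h := ge_of_tendsto' (tendsto_sum_nat_add g) htail
  norm_num at h

end AbelDini

noncomputable def onePlusPartialSum (a : ℕ → ℝ) (n : ℕ) : ℝ :=
  1 + ∑ k ∈ range (n + 1), a k

section OnePlusPartialSum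

variable {a : ℕ → ℝ}

lemma onePlusPartialSum_congr {a' : ℕ → ℝ} {n : ℕ} (h : ∀ k ≤ n, a k = a' k) :
    onePlusPartialSum a n = onePlusPartialSum a' n := by
  unfold onePlusPartialSum
  congr 1
  exact sum_congr rfl fun k hk => h k (Nat.lt_succ_iff.1 (mem_range.1 hk))

lemma onePlusPartialSum_succ (n : ℕ) :
    onePlusPartialSum a (n + 1) = onePlusPartialSum a n + a (n + 1) := by
  simp only [onePlusPartialSum, sum_range_succ _ (n + 1)]
  ring

variable (ha : ∀ n, 0 ≤ a n)
include ha

lemma le_onePlusPartialSum (n : ℕ) : 1 + a n ≤ onePlusPartialSum a n := by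
  unfold onePlusPartialSum
  linarith [single_le_sum (fun k _ => ha k) (self_mem_range_succ n)]

lemma onePlusPartialSum_pos (n : ℕ) : 0 < onePlusPartialSum a n := by
  linarith [le_onePlusPartialSum ha n, ha n]

lemma monotone_onePlusPartialSum : Monotone (onePlusPartialSum a) :=
  monotone_nat_of_le_succ fun n => by
    rw [onePlusPartialSum_succ]
    linarith [ha (n + 1)]

lemma tendsto_onePlusPartialSum_atTop (h : ¬ Summable a) :
    Tendsto (onePlusPartialSum a) atTop atTop :=
  tendsto_atTop_add_const_left atTop 1 <|
    ((not_summable_iff_tendsto_nat_atTop_of_nonneg ha).1 h).comp (tendsto_add_atTop_nat 1)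

end OnePlusPartialSum

lemma tendsto_onePlusPartialSum {a : ℕ → ℝ} (h : Summable a) :
    Tendsto (onePlusPartialSum a) atTop (𝓝 (1 + ∑' k, a k)) :=
  tendsto_const_nhds.add (h.hasSum.tendsto_sum_nat.comp (tendsto_add_atTop_nat 1))

lemma not_summable_inv_onePlusPartialSum_mul {a : ℕ → ℝ} (ha : ∀ n, 0 ≤ a n)
    (h : ¬ Summable a) : ¬ Summable fun n => (onePlusPartialSum a n)⁻¹ * a n := by
  rw [← summable_nat_add_iff 1]
  have hshift : (fun n => (onePlusPartialSum a (n + 1))⁻¹ * a (n + 1)) = fun n =>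
      (onePlusPartialSum a (n + 1) - onePlusPartialSum a n) / onePlusPartialSum a (n + 1) := by
    funext n
    rw [onePlusPartialSum_succ, add_sub_cancel_left, inv_mul_eq_div]
  rw [hshift]
  exact not_summable_sub_div_of_tendsto_atTop (monotone_onePlusPartialSum ha)
    (onePlusPartialSum_pos ha) (tendsto_onePlusPartialSum_atTop ha h)

/-- For any sequence of positive reals `a` there is a sequence of positive
reals `ε` (depending only on the initial segments of `a`) with `ε n * a n ≤ 1`,
such that if `∑ a n = ∞` then `∑ ε n * a n = ∞` and `ε n → 0`, while if
`∑ a n < ∞` then `ε n` converges to a positive real. -/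
theorem stmt_8 :
    ∃ E : (ℕ → ℝ) → ℕ → ℝ,
      (∀ a a' : ℕ → ℝ, ∀ n, (∀ k ≤ n, a k = a' k) → E a n = E a' n) ∧
      ∀ a : ℕ → ℝ, (∀ n, 0 < a n) →
        (∀ n, 0 < E a n) ∧
        (∀ n, E a n * a n ≤ 1) ∧
        (¬ Summable a →
          ¬ Summable (fun n => E a n * a n) ∧ Tendsto (E a) atTop (nhds 0)) ∧
        (Summable a → ∃ L : ℝ, 0 < L ∧ Tendsto (E a) atTop (nhds L)) := by
  refine ⟨fun a n => (onePlusPartialSum a n)⁻¹,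
    fun a a' n h => congrArg _ (onePlusPartialSum_congr h), fun a ha => ?_⟩
  have ha₀ : ∀ n, 0 ≤ a n := fun n => (ha n).le
  refine ⟨fun n => inv_pos.2 (onePlusPartialSum_pos ha₀ n), fun n => ?_, fun h => ?_, fun h => ?_⟩
  · rw [inv_mul_le_one₀ (onePlusPartialSum_pos ha₀ n)]
    linarith [le_onePlusPartialSum ha₀ n]
  · exact ⟨not_summable_inv_onePlusPartialSum_mul ha₀ h,
      (tendsto_onePlusPartialSum_atTop ha₀ h).inv_tendsto_atTop⟩
  · have hL : 0 < 1 + ∑' k, a k := by linarith [(tsum_nonneg ha₀ : 0 ≤ ∑' k, a k)]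
    exact ⟨_, inv_pos.2 hL, (tendsto_onePlusPartialSum h).inv₀ hL.ne'⟩
end

section
/- Suppose h : ℝ → ℝ satisfies: h(x) = h(|x|) ≥ 0, h(x)/x is monotone increasing for x > 0, h(x)/x² is monotone decreasing for x > 0; let h^{-1} denote its inverse on the positive reals. Let g be a positive increasing function, (A_n) an increasing positive sequence, and (ε_n) positive reals with ε_n → 0. Then h^{-1}(g(A_n)·ε_n^{-1}) / h^{-1}(g(A_n)) ≥ ε_n^{-1/2} for all sufficiently large n, and in particular this ratio tends to infinity. -/
/-!
With `a = hinv y` and `b = hinv (y * c)` for `c ≥ 1`, the decay of `h x / x ^ 2` between `a ≤ b`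
gives `y * c / b ^ 2 ≤ y / a ^ 2`, that is `b / a ≥ √c`. Taking `y = g (A n)` and
`c = (ε n)⁻¹ → ∞` gives both claims.
-/

open Filter Set

section InverseOnNonneg

variable {h hinv : ℝ → ℝ}

lemma inv_nonneg_of_even (heven : ∀ x, h x = h |x|)
    (hinv_left : ∀ x, 0 ≤ x → hinv (h x) = x) (hinv_right : ∀ y, 0 ≤ y → h (hinv y) = y)
    {y : ℝ} (hy : 0 ≤ y) : 0 ≤ hinv y := by
  have hinv_eq_abs : hinv y = |hinv y| :=
    calc hinv y = hinv (h |hinv y|) := by rw [← heven, hinv_right y hy]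
      _ = |hinv y| := hinv_left _ (abs_nonneg _)
  exact hinv_eq_abs ▸ abs_nonneg _

lemma inv_pos_of_map_zero (h0 : h 0 = 0) (hinv_right : ∀ y, 0 ≤ y → h (hinv y) = y)
    {y : ℝ} (hy : 0 < y) (hnonneg : 0 ≤ hinv y) : 0 < hinv y := by
  refine hnonneg.lt_of_ne fun hzero => hy.ne ?_
  have := hinv_right y hy.le
  rwa [← hzero, h0] at this

lemma div_le_sq_div_of_div_sq_antitone
    (hA2 : ∀ x y : ℝ, 0 < x → x ≤ y → h y / y ^ 2 ≤ h x / x ^ 2)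
    {a b : ℝ} (ha : 0 < a) (hab : a ≤ b) (hha : 0 < h a) : h b / h a ≤ (b / a) ^ 2 := by
  have hb : 0 < b := ha.trans_le hab
  have hdecay := hA2 a b ha hab
  rw [div_le_div_iff₀ (by positivity) (by positivity)] at hdecay
  rw [div_le_iff₀ hha, div_pow, div_mul_eq_mul_div, le_div_iff₀ (by positivity)]
  linarith

lemma rpow_half_le_inv_mul_div_inv (heven : ∀ x, h x = h |x|)
    (hA2 : ∀ x y : ℝ, 0 < x → x ≤ y → h y / y ^ 2 ≤ h x / x ^ 2) (h0 : h 0 = 0)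
    (hmono : StrictMonoOn h (Ici 0))
    (hinv_left : ∀ x, 0 ≤ x → hinv (h x) = x) (hinv_right : ∀ y, 0 ≤ y → h (hinv y) = y)
    {y c : ℝ} (hy : 0 < y) (hc : 1 ≤ c) :
    c ^ ((1 : ℝ) / 2) ≤ hinv (y * c) / hinv y := by
  have hyc : y ≤ y * c := le_mul_of_one_le_right hy.le hc
  set a := hinv y
  set b := hinv (y * c)
  have ha : 0 < a :=
    inv_pos_of_map_zero h0 hinv_right hy (inv_nonneg_of_even heven hinv_left hinv_right hy.le)
  have hb : 0 ≤ b := inv_nonneg_of_even heven hinv_left hinv_right (hy.le.trans hyc)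
  have hha : h a = y := hinv_right y hy.le
  have hhb : h b = y * c := hinv_right _ (hy.le.trans hyc)
  have hab : a ≤ b := (hmono.le_iff_le ha.le hb).1 (by rwa [hha, hhb])
  have hc_le : c ≤ (b / a) ^ 2 := by
    have := div_le_sq_div_of_div_sq_antitone hA2 ha hab (hha ▸ hy)
    rwa [hha, hhb, mul_div_cancel_left₀ _ hy.ne'] at this
  rw [← Real.sqrt_eq_rpow, Real.sqrt_le_iff]
  exact ⟨by positivity, hc_le⟩

end InverseOnNonneg

theorem stmt_10_general (h hinv : ℝ → ℝ)
    (hA0 : ∀ x : ℝ, h x = h |x| ∧ 0 ≤ h x)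
    (hA2 : ∀ x y : ℝ, 0 < x → x ≤ y → h y / y ^ 2 ≤ h x / x ^ 2)
    (h0 : h 0 = 0)
    (hmono : StrictMonoOn h (Set.Ici (0 : ℝ)))
    (hinv_left : ∀ x : ℝ, 0 ≤ x → hinv (h x) = x)
    (hinv_right : ∀ y : ℝ, 0 ≤ y → h (hinv y) = y)
    (g : ℝ → ℝ) (hgpos : ∀ x, 0 < g x)
    (A : ℕ → ℝ)
    (ε : ℕ → ℝ) (hεpos : ∀ n, 0 < ε n) (hε0 : Tendsto ε atTop (nhds 0)) :
    (∀ᶠ n in atTop,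
      ((ε n)⁻¹) ^ ((1 : ℝ) / 2) ≤
        hinv (g (A n) * (ε n)⁻¹) / hinv (g (A n))) ∧
    Tendsto (fun n => hinv (g (A n) * (ε n)⁻¹) / hinv (g (A n)))
      atTop atTop := by
  have hratio : ∀ᶠ n in atTop,
      ((ε n)⁻¹) ^ ((1 : ℝ) / 2) ≤ hinv (g (A n) * (ε n)⁻¹) / hinv (g (A n)) := by
    filter_upwards [hε0.eventually_lt_const one_pos] with n hn
    exact rpow_half_le_inv_mul_div_inv (fun x => (hA0 x).1) hA2 h0 hmono hinv_left hinv_right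
      (hgpos _) ((one_le_inv₀ (hεpos n)).2 hn.le)
  have hinv_ε : Tendsto (fun n => (ε n)⁻¹) atTop atTop :=
    (tendsto_nhdsWithin_of_tendsto_nhds_of_eventually_within _ hε0
      (.of_forall hεpos)).inv_tendsto_nhdsGT_zero
  exact ⟨hratio, tendsto_atTop_mono' _ hratio ((tendsto_rpow_atTop (by norm_num)).comp hinv_ε)⟩

/-- Under assumptions (A0)-(A2) and `h 0 = 0`, with `hinv` the inverse of `h`
on the nonnegative reals, `g` positive increasing, `A n` positive nondecreasing
and `ε n → 0` positive, we have
`hinv (g (A n) * (ε n)⁻¹) / hinv (g (A n)) ≥ (ε n)⁻¹ ^ (1/2)` for all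
sufficiently large `n`; in particular the ratio tends to infinity. -/
theorem stmt_10 (h hinv : ℝ → ℝ)
    (hA0 : ∀ x : ℝ, h x = h |x| ∧ 0 ≤ h x)
    (hA1 : ∀ x y : ℝ, 0 < x → x ≤ y → h x / x ≤ h y / y)
    (hA2 : ∀ x y : ℝ, 0 < x → x ≤ y → h y / y ^ 2 ≤ h x / x ^ 2)
    (h0 : h 0 = 0)
    (hmono : StrictMonoOn h (Set.Ici (0 : ℝ)))
    (hinv_left : ∀ x : ℝ, 0 ≤ x → hinv (h x) = x)
    (hinv_right : ∀ y : ℝ, 0 ≤ y → h (hinv y) = y)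
    (g : ℝ → ℝ) (hgpos : ∀ x, 0 < g x) (hgmono : Monotone g)
    (A : ℕ → ℝ) (hApos : ∀ n, 0 < A n) (hAmono : Monotone A)
    (ε : ℕ → ℝ) (hεpos : ∀ n, 0 < ε n) (hε0 : Tendsto ε atTop (nhds 0)) :
    (∀ᶠ n in atTop,
      ((ε n)⁻¹) ^ ((1 : ℝ) / 2) ≤
        hinv (g (A n) * (ε n)⁻¹) / hinv (g (A n))) ∧
    Tendsto (fun n => hinv (g (A n) * (ε n)⁻¹) / hinv (g (A n)))
      atTop atTop :=
  stmt_10_general h hinv hA0 hA2 h0 hmono hinv_left hinv_right g hgpos A ε hεpos hε0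
end

section
/- In the bounded forecasting game, fix a rational q with K_0 < q < 1 and consider Reality's strategy: if p_n = 0 choose x_n > 0 with M_n x_n ≤ (q - K_{n-1})/2; if p_n = 1 choose x_n < 1 with M_n(x_n - 1) ≤ (q - K_{n-1})/2; if 0 < p_n < 1 set x_n = 1 when M_n ≤ 0 and x_n = 0 when M_n > 0. Then inductively K_n ≤ (q + K_{n-1})/2, and hence sup_n K_n ≤ q < 1 provided K_0 ≤ q. -/
open Filter Finset

/-!
Reality keeps Skeptic's gain `M * (x - p)` in each round at most half the gap `q - K`: for an
interior forecast she plays the endpoint on the side of `p` where Skeptic's bet `M` loses, so the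
gain is nonpositive, and at the extreme forecasts the gain is bounded by her choice of `x`. Hence
`K (n+1) ≤ (q + K n)/2` as long as `K n ≤ q`, and the midpoint of `q` and `K n` is again `≤ q`.
-/

lemma gain_nonpos_of_mem_Ioo {p M x : ℝ} (hp0 : 0 < p) (hp1 : p < 1)
    (hx1 : M ≤ 0 → x = 1) (hx0 : 0 < M → x = 0) : M * (x - p) ≤ 0 := by
  rcases le_or_gt M 0 with hM | hM
  · rw [hx1 hM]
    exact mul_nonpos_of_nonpos_of_nonneg hM (by linarith)
  · rw [hx0 hM]
    exact mul_nonpos_of_nonneg_of_nonpos hM.le (by linarith)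

lemma add_gain_le_midpoint {q K p M x : ℝ} (hp : p ∈ Set.Icc (0 : ℝ) 1) (hKq : K ≤ q)
    (h0 : p = 0 → M * x ≤ (q - K) / 2) (h1 : p = 1 → M * (x - 1) ≤ (q - K) / 2)
    (hmid : 0 < p → p < 1 → (M ≤ 0 → x = 1) ∧ (0 < M → x = 0)) :
    K + M * (x - p) ≤ (q + K) / 2 := by
  rcases hp.1.eq_or_lt with rfl | hp0
  · rw [sub_zero]
    linarith [h0 rfl]
  rcases hp.2.eq_or_lt with rfl | hp1
  · linarith [h1 rfl]
  obtain ⟨hx1, hx0⟩ := hmid hp0 hp1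
  linarith [gain_nonpos_of_mem_Ioo hp0 hp1 hx1 hx0]

lemma le_of_le_midpoint_step {q : ℝ} {K : ℕ → ℝ} (hK0 : K 0 ≤ q)
    (hstep : ∀ n, K n ≤ q → K (n + 1) ≤ (q + K n) / 2) (n : ℕ) : K n ≤ q := by
  induction n with
  | zero => exact hK0
  | succ n ih => linarith [hstep n ih]

theorem stmt_17_general (q : ℚ) (p M x K : ℕ → ℝ)
    (hp : ∀ n, p n ∈ Set.Icc (0 : ℝ) 1)
    (hK0 : K 0 < (q : ℝ))
    (hrec : ∀ n, K (n + 1) = K n + M n * (x n - p n))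
    (h0 : ∀ n, p n = 0 → 0 < x n ∧ M n * x n ≤ ((q : ℝ) - K n) / 2)
    (h1 : ∀ n, p n = 1 → x n < 1 ∧ M n * (x n - 1) ≤ ((q : ℝ) - K n) / 2)
    (hmid : ∀ n, 0 < p n → p n < 1 →
      (M n ≤ 0 → x n = 1) ∧ (0 < M n → x n = 0)) :
    (∀ n, K (n + 1) ≤ ((q : ℝ) + K n) / 2) ∧ ∀ n, K n ≤ (q : ℝ) := by
  have step : ∀ n, K n ≤ q → K (n + 1) ≤ ((q : ℝ) + K n) / 2 := fun n hKq =>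
    hrec n ▸ add_gain_le_midpoint (hp n) hKq (fun h => (h0 n h).2) (fun h => (h1 n h).2)
      (hmid n)
  have bounded := le_of_le_midpoint_step hK0.le step
  exact ⟨fun n => step n (bounded n), bounded⟩

/-- In the bounded forecasting game, fix a rational `q` with `K 0 < q < 1`.
If Reality plays: for `p n = 0` some `x n > 0` with `M n * x n ≤ (q - K n)/2`;
for `p n = 1` some `x n < 1` with `M n * (x n - 1) ≤ (q - K n)/2`; and for
`0 < p n < 1`, `x n = 1` when `M n ≤ 0` and `x n = 0` when `M n > 0`; then
`K (n+1) ≤ (q + K n)/2` for all `n`, and hence `K n ≤ q < 1` for all `n`. -/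
theorem stmt_17 (q : ℚ) (p M x K : ℕ → ℝ)
    (hp : ∀ n, p n ∈ Set.Icc (0 : ℝ) 1)
    (hxb : ∀ n, x n ∈ Set.Icc (0 : ℝ) 1)
    (hK0 : K 0 < (q : ℝ)) (hq1 : (q : ℝ) < 1)
    (hrec : ∀ n, K (n + 1) = K n + M n * (x n - p n))
    (h0 : ∀ n, p n = 0 → 0 < x n ∧ M n * x n ≤ ((q : ℝ) - K n) / 2)
    (h1 : ∀ n, p n = 1 → x n < 1 ∧ M n * (x n - 1) ≤ ((q : ℝ) - K n) / 2)
    (hmid : ∀ n, 0 < p n → p n < 1 →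
      (M n ≤ 0 → x n = 1) ∧ (0 < M n → x n = 0)) :
    (∀ n, K (n + 1) ≤ ((q : ℝ) + K n) / 2) ∧ ∀ n, K n ≤ (q : ℝ) :=
  stmt_17_general q p M x K hp hK0 hrec h0 h1 hmid
end
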